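/- For every c₃ < 1/ln 2 and every c₄ > 2 there exists δ > 0 with the following property: for every n ≥ 1 and every subset A ⊆ C_n with |A| ≥ 2 and (ln|A|)/n ≤ δ, there exists p with 0 < p ≤ 1 such that, setting ρ = p/2 − Δ(A,p)/n, one has c₃·ρ²·ln(1/ρ) ≤ (ln|A|)/n ≤ c₄·ρ·ln(1/ρ). -/

import Mathlib

/-- The randomized Hamming distance `d_l(x,y) = Σ_{i : x i ≠ y i} l i`, where the coordinates
with `l i = 1` are the ones that are counted. -/
def dl {ι : Type*} [Fintype ι] (l x y : ι → Bool) : ℕ :=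
  (Finset.univ.filter fun i => x i ≠ y i ∧ l i = true).card

/-- The randomized Hamming distance from a point `x` to a subset `A`:
`d_l(x,A) = min_{y ∈ A} d_l(x,y)`. -/
noncomputable def dlToSet {ι : Type*} [Fintype ι] (l x : ι → Bool) (A : Set (ι → Bool)) : ℕ :=
  sInf ((fun y => dl l x y) '' A)

/-- The probability `p^{|l|}(1-p)^{n-|l|}` of the vector `l` of `n` independent
Bernoulli(p) coordinates. -/
noncomputable def bernWeight {ι : Type*} [Fintype ι] (p : ℝ) (l : ι → Bool) : ℝ :=
  p ^ (Finset.univ.filter fun i => l i = true).card *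
    (1 - p) ^ (Finset.univ.filter fun i => l i = false).card

/-- `Δ(A,p)`: the expectation of `d_l(x,A)` when `x` is uniform on the cube and `l` has
independent Bernoulli(p) coordinates. -/
noncomputable def avgDistP {ι : Type*} [Fintype ι] [DecidableEq ι] (p : ℝ)
    (A : Set (ι → Bool)) : ℝ :=
  ∑ l : ι → Bool, ∑ x : ι → Bool,
    (bernWeight p l / 2 ^ Fintype.card ι) * (dlToSet l x A : ℝ)

/-!
Let `L = ln |A| / n` and pick `t ∈ (0, 1)` with `t ln (1/t) = L / c₄`. Then the upper bound holds
with equality for `ρ = t`, and the lower bound reduces to `c₃ t ≤ c₄`, true as `c₃ < 1/ln 2 < 2`.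
Since `ρ(p) ≤ p/2` and `ρ` is continuous in `p`, some `p ∈ [t, 1]` has `ρ(p) = t` as soon as
`ρ(1) ≥ t`. If `A` shatters a set `R` of coordinates, every `x` is within Hamming distance
`#{i ∉ R | x i ≠ y i}` of a point `y ∈ A` that depends only on `x` restricted to `R`; averaging
over `x` gives `ρ(1) ≥ |R| / (2n)`. By Sauer–Shelah and `∑_{i ≤ k} (n choose i) < e^{ηn} η^{-k}`,
`A` shatters more than `ηn` coordinates once `ln |A| ≥ n (η + η ln (1/η))`, and
`η = (2/c₄) L / ln (1/L)` satisfies this together with `(η/2) ln (2/η) ≥ L / c₄` for small `L`.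
-/

open Finset Real Filter

lemma sum_range_choose_mul_pow_lt_exp {n k : ℕ} (hn : n ≠ 0) (hk : k ≤ n) {x : ℝ} (hx₀ : 0 < x)
    (hx₁ : x ≤ 1) : (∑ i ∈ range (k + 1), (n.choose i : ℝ)) * x ^ k < exp (x * n) :=
  calc (∑ i ∈ range (k + 1), (n.choose i : ℝ)) * x ^ k
      ≤ ∑ i ∈ range (k + 1), (n.choose i : ℝ) * x ^ i := by
        rw [sum_mul]
        exact sum_le_sum fun i hi => mul_le_mul_of_nonneg_left
          (pow_le_pow_of_le_one hx₀.le hx₁ (Nat.lt_succ_iff.1 (mem_range.1 hi))) (by positivity)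
    _ ≤ ∑ i ∈ range (n + 1), (n.choose i : ℝ) * x ^ i :=
        sum_le_sum_of_subset_of_nonneg (range_subset_range.2 (by omega)) fun _ _ _ => by positivity
    _ = (x + 1) ^ n := by simp [add_pow, mul_comm]
    _ < exp x ^ n := by
        gcongr
        linarith [add_one_lt_exp hx₀.ne']
    _ = exp (x * n) := by rw [← exp_nat_mul, mul_comm]

lemma sum_range_choose_floor_lt_exp {n : ℕ} (hn : n ≠ 0) {η : ℝ} (hη₀ : 0 < η) (hη₁ : η ≤ 1) :
    ∑ i ∈ range (⌊η * n⌋₊ + 1), (n.choose i : ℝ) < exp (n * (η + negMulLog η)) := by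
  set k := ⌊η * n⌋₊
  have hk : (k : ℝ) ≤ η * n := Nat.floor_le (by positivity)
  have hkn : k ≤ n := Nat.floor_le_of_le (by nlinarith [(Nat.cast_nonneg n : (0:ℝ) ≤ n)])
  have hpow : exp (η * n * log η) ≤ η ^ k := by
    rw [← exp_log (pow_pos hη₀ k), log_pow]
    exact exp_le_exp.2 (mul_le_mul_of_nonpos_right hk (log_nonpos hη₀.le hη₁))
  calc _ < exp (η * n) / η ^ k := by
        rw [lt_div_iff₀ (pow_pos hη₀ k)]
        exact sum_range_choose_mul_pow_lt_exp hn hkn hη₀ hη₁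
    _ ≤ exp (η * n) / exp (η * n * log η) := by gcongr
    _ = _ := by rw [← exp_sub, negMulLog]; ring_nf

lemma eventually_mul_add_add_log_le {γ : ℝ} (hγ₀ : 0 ≤ γ) (hγ₁ : γ < 1) (a : ℝ) :
    ∀ᶠ W in atTop, γ * (a + W + log W) ≤ W := by
  have hlo : (fun W => a + log W) =o[atTop] id :=
    (Asymptotics.isLittleO_const_id_atTop a).add isLittleO_log_id_atTop
  filter_upwards [hlo.def (sub_pos.2 hγ₁), eventually_ge_atTop 0] with W hW hW₀
  rw [Real.norm_eq_abs, Real.norm_eq_abs, id, abs_of_nonneg hW₀] at hW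
  calc γ * (a + W + log W) = γ * W + γ * (a + log W) := by ring
    _ ≤ γ * W + γ * ((1 - γ) * W) := by gcongr; exact (le_abs_self _).trans hW
    _ ≤ γ * W + (1 - γ) * W := by
        have h := mul_nonneg (sub_nonneg.2 hγ₁.le) hW₀
        nlinarith [mul_nonneg (sub_nonneg.2 hγ₁.le) h]
    _ = W := by ring

lemma exists_entropy_scale {c : ℝ} (hc : 2 < c) :
    ∃ δ > 0, ∀ L, 0 < L → L ≤ δ →
      ∃ η, 0 < η ∧ η < 1 ∧ η + negMulLog η ≤ L ∧ L / c ≤ negMulLog (η / 2) := by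
  have hc₀ : 0 < c := by linarith
  set γ := 2 / c
  have hγ₀ : 0 < γ := by positivity
  have hγ₁ : γ < 1 := (div_lt_one hc₀).2 hc
  obtain ⟨W₀, hW₀⟩ := eventually_atTop.1 (eventually_mul_add_add_log_le hγ₀.le hγ₁ (1 - log γ))
  refine ⟨exp (-max W₀ 1), exp_pos _, fun L hL hLδ => ?_⟩
  set W := -log L
  have hW : max W₀ 1 ≤ W := by
    have := log_le_log hL hLδ
    rw [log_exp] at this
    linarith
  have hW₁ : 1 ≤ W := (le_max_right _ _).trans hW
  have hL₁ : L < 1 := hLδ.trans_lt (exp_lt_one_iff.2 (by linarith [le_max_right W₀ 1]))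
  -- `η = γ L / log (1 / L)`, so that `log (1 / η) = W + log W - log γ`
  have hlogη : log (γ * L / W) = log γ - W - log W := by
    rw [log_div (by positivity) (by positivity), log_mul hγ₀.ne' hL.ne']
    ring
  refine ⟨γ * L / W, by positivity, ?_, ?_, ?_⟩
  · rw [div_lt_one (by positivity)]
    nlinarith
  · calc γ * L / W + negMulLog (γ * L / W) = L * (γ * (1 - log γ + W + log W)) / W := by
          rw [negMulLog, hlogη]
          field_simp
          ring
      _ ≤ L * W / W := by gcongr; exact hW₀ W ((le_max_left _ _).trans hW)
      _ = L := by field_simp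
  · have hlog : 0 ≤ log 2 - log γ + log W := by
      have := log_nonneg hW₁
      have := log_nonpos hγ₀.le hγ₁.le
      have := log_nonneg (one_le_two (α := ℝ))
      linarith
    calc L / c = γ * L / W / 2 * W := by simp only [γ]; field_simp
      _ ≤ γ * L / W / 2 * (W + (log 2 - log γ + log W)) := by gcongr; linarith
      _ = negMulLog (γ * L / W / 2) := by
          rw [negMulLog, log_div (by positivity) two_ne_zero, hlogη]
          ring

lemma exists_negMulLog_eq {a b : ℝ} (hb : 0 ≤ b) (ha : 0 < a) (hab : a ≤ negMulLog b) :
    ∃ t, 0 < t ∧ t ≤ b ∧ negMulLog t = a := by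
  obtain ⟨t, ⟨ht₀, htb⟩, ht⟩ := intermediate_value_Icc hb continuous_negMulLog.continuousOn
    ⟨by rw [negMulLog_zero]; exact ha.le, hab⟩
  refine ⟨t, ht₀.lt_of_ne ?_, htb, ht⟩
  rintro rfl
  rw [negMulLog_zero] at ht
  exact ha.ne ht

lemma bounds_of_negMulLog_eq {c₃ c₄ L ρ : ℝ} (h₃ : c₃ < 2) (h₄ : 2 < c₄) (hL : 0 ≤ L)
    (hρ₀ : 0 < ρ) (hρ₁ : ρ ≤ 1) (hρ : negMulLog ρ = L / c₄) :
    c₃ * ρ ^ 2 * log (1 / ρ) ≤ L ∧ L ≤ c₄ * ρ * log (1 / ρ) := by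
  have hc₄ : 0 < c₄ := by linarith
  have hmul : ρ * log (1 / ρ) = L / c₄ := by rw [one_div, log_inv, ← hρ, negMulLog]; ring
  have hc₃ρ : c₃ * ρ ≤ c₄ := by nlinarith
  constructor
  · calc c₃ * ρ ^ 2 * log (1 / ρ) = c₃ * ρ * (L / c₄) := by rw [← hmul]; ring
      _ ≤ c₄ * (L / c₄) := by gcongr
      _ = L := by field_simp
  · rw [mul_assoc, hmul]
    field_simp
    rfl

def ShattersCoords {ι : Type*} (A : Set (ι → Bool)) (R : Finset ι) : Prop :=
  ∀ b : ι → Bool, ∃ y ∈ A, ∀ i ∈ R, y i = b i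

section Cube

variable {ι : Type*} [Fintype ι]

lemma exists_shattersCoords_of_sum_choose_lt (A : Set (ι → Bool)) {d : ℕ}
    (hd : ∑ k ∈ range d, (Fintype.card ι).choose k < Nat.card A) :
    ∃ R, d ≤ #R ∧ ShattersCoords A R := by
  classical
  let support : (ι → Bool) → Finset ι := fun y => {i | y i = true}
  have hsupport : Function.Injective support := fun y y' h => by
    ext i
    simpa [support] using congrArg (i ∈ ·) h
  let 𝒜 := ({y | y ∈ A} : Finset _).image support
  have h𝒜 : #𝒜 = Nat.card A := by
    rw [card_image_of_injective _ hsupport]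
    simp
  have hshatterer : Nat.card A ≤ #𝒜.shatterer := h𝒜 ▸ card_le_card_shatterer 𝒜
  have hvc : d ≤ 𝒜.vcDim := by
    by_contra! hlt
    have hsub : Iic 𝒜.vcDim ⊆ range d := fun k hk => by
      simp only [mem_Iic, mem_range] at hk ⊢
      omega
    exact hd.not_ge <| hshatterer.trans <| card_shatterer_le_sum_vcDim.trans <|
      sum_le_sum_of_subset hsub
  obtain ⟨R, hR, hRcard⟩ := exists_mem_eq_sup _ (card_pos.1 (hd.trans_le hshatterer).pos) card
  refine ⟨R, hRcard ▸ hvc, fun b => ?_⟩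
  obtain ⟨u, hu, hRu⟩ := (mem_shatterer.1 hR) (filter_subset (b · = true) R)
  obtain ⟨y, hy, rfl⟩ := mem_image.1 hu
  refine ⟨y, by simpa using hy, fun i hi => ?_⟩
  simpa [support, hi] using congrArg (i ∈ ·) hRu

lemma bernWeight_nonneg {p : ℝ} (h0 : 0 ≤ p) (h1 : p ≤ 1) (l : ι → Bool) :
    0 ≤ bernWeight p l :=
  mul_nonneg (pow_nonneg h0 _) (pow_nonneg (sub_nonneg.2 h1) _)

lemma bernWeight_one (l : ι → Bool) :
    bernWeight 1 l = if l = fun _ => true then 1 else 0 := by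
  simp [bernWeight, zero_pow_eq, filter_eq_empty_iff, funext_iff]

variable [DecidableEq ι]

lemma avgDistP_nonneg (A : Set (ι → Bool)) {p : ℝ} (h0 : 0 ≤ p) (h1 : p ≤ 1) :
    0 ≤ avgDistP p A :=
  sum_nonneg fun l _ => sum_nonneg fun _ _ =>
    mul_nonneg (div_nonneg (bernWeight_nonneg h0 h1 l) (by positivity)) (Nat.cast_nonneg _)

lemma continuous_avgDistP (A : Set (ι → Bool)) : Continuous fun p => avgDistP p A := by
  unfold avgDistP bernWeight
  fun_prop

lemma avgDistP_one (A : Set (ι → Bool)) :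
    avgDistP 1 A = (∑ x, (dlToSet (fun _ => true) x A : ℝ)) / 2 ^ Fintype.card ι := by
  simp [avgDistP, bernWeight_one, ite_mul, sum_ite_eq', div_eq_inv_mul, mul_sum]

lemma two_mul_card_filter_apply_ne {f : (ι → Bool) → Bool} {i : ι}
    (hf : ∀ x b, f (Function.update x i b) = f x) :
    2 * #{x | x i ≠ f x} = 2 ^ Fintype.card ι := by
  let flip : (ι → Bool) → (ι → Bool) := fun x => Function.update x i (!x i)
  have hflip : #{x | x i ≠ f x} = #{x | ¬ x i ≠ f x} :=
    card_nbij' flip flip (fun x => by simp [flip, hf, Bool.eq_not])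
      (fun x => by simp [flip, hf, Bool.eq_not])
      (fun x _ => by simp [flip]) (fun x _ => by simp [flip])
  rw [two_mul]
  nth_rw 2 [hflip]
  rw [card_filter_add_card_filter_not, card_univ, Fintype.card_fun, Fintype.card_bool]

lemma two_mul_sum_dlToSet_le {A : Set (ι → Bool)} {R : Finset ι} (hR : ShattersCoords A R) :
    2 * ∑ x, dlToSet (fun _ => true) x A ≤ (Fintype.card ι - #R) * 2 ^ Fintype.card ι := by
  choose g hgA hgR using hR
  -- `h x ∈ A` agrees with `x` on `R` and depends only on the coordinates of `x` in `R`
  let h : (ι → Bool) → (ι → Bool) := fun x => g (fun i => if i ∈ R then x i else false)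
  have hagree : ∀ x, ∀ i ∈ R, h x i = x i := fun x i hi =>
    (hgR _ i hi).trans (if_pos hi)
  have hflip : ∀ i ∉ R, ∀ x b, h (Function.update x i b) = h x := by
    intro i hi x b
    simp only [h]
    congr 1
    ext j
    split_ifs with hj
    · exact Function.update_of_ne (ne_of_mem_of_not_mem hj hi) _ _
    · rfl
  have hdist : ∀ x, dlToSet (fun _ => true) x A ≤ ∑ i ∈ Rᶜ, if x i ≠ h x i then 1 else 0 := by
    intro x
    calc dlToSet (fun _ => true) x A ≤ dl (fun _ => true) x (h x) := Nat.sInf_le ⟨h x, hgA _, rfl⟩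
      _ ≤ _ := by
        rw [sum_boole, dl]
        refine card_le_card fun i hi => ?_
        simp only [mem_filter, mem_univ, true_and, mem_compl] at hi ⊢
        exact ⟨fun hiR => hi.1 (hagree x i hiR).symm, hi.1⟩
  calc 2 * ∑ x, dlToSet (fun _ => true) x A
      ≤ 2 * ∑ x, ∑ i ∈ Rᶜ, if x i ≠ h x i then 1 else 0 := by gcongr with x; exact hdist x
    _ = ∑ i ∈ Rᶜ, 2 * ∑ x, if x i ≠ h x i then 1 else 0 := by rw [sum_comm, mul_sum]
    _ = ∑ i ∈ Rᶜ, 2 ^ Fintype.card ι := by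
        refine sum_congr rfl fun i hi => ?_
        rw [sum_boole]
        exact two_mul_card_filter_apply_ne fun x b => congrFun (hflip i (mem_compl.1 hi) x b) i
    _ = (Fintype.card ι - #R) * 2 ^ Fintype.card ι := by simp [card_compl]

lemma card_div_le_half_sub_avgDistP_one {A : Set (ι → Bool)} {R : Finset ι}
    (hR : ShattersCoords A R) :
    (#R : ℝ) / (2 * Fintype.card ι) ≤ 1 / 2 - avgDistP 1 A / Fintype.card ι := by
  have hsum : 2 * ∑ x, (dlToSet (fun _ => true) x A : ℝ)
      ≤ (Fintype.card ι - #R) * 2 ^ Fintype.card ι := by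
    have h := (Nat.cast_le (α := ℝ)).2 (two_mul_sum_dlToSet_le hR)
    push_cast [Nat.cast_sub (card_le_univ R)] at h
    exact h
  have havg : 2 * avgDistP 1 A ≤ Fintype.card ι - #R := by
    rw [avgDistP_one, mul_div_assoc', div_le_iff₀ (by positivity)]
    exact hsum
  rcases (Nat.cast_nonneg (α := ℝ) (Fintype.card ι)).eq_or_lt with hι | hι
  · simp [← hι]
  · rw [div_le_iff₀ (by positivity)]
    field_simp
    linarith

lemma div_two_le_half_sub_avgDistP_one [Nonempty ι] {A : Set (ι → Bool)} {η : ℝ} (hη₀ : 0 < η)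
    (hη₁ : η ≤ 1) (hA : exp (Fintype.card ι * (η + negMulLog η)) ≤ Nat.card A) :
    η / 2 ≤ 1 / 2 - avgDistP 1 A / Fintype.card ι := by
  set n := Fintype.card ι
  have hn : (0 : ℝ) < n := by simp [n, Fintype.card_pos]
  have hchoose : ∑ k ∈ range (⌊η * n⌋₊ + 1), n.choose k < Nat.card A := by
    exact_mod_cast (sum_range_choose_floor_lt_exp Fintype.card_ne_zero hη₀ hη₁).trans_le hA
  obtain ⟨R, hdR, hR⟩ := exists_shattersCoords_of_sum_choose_lt A hchoose
  refine le_trans ?_ (card_div_le_half_sub_avgDistP_one hR)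
  rw [le_div_iff₀ (by positivity)]
  have hfloor := Nat.lt_floor_add_one (η * n)
  have hdR' : (⌊η * n⌋₊ + 1 : ℝ) ≤ #R := by exact_mod_cast hdR
  nlinarith

lemma exists_half_sub_avgDistP_eq (A : Set (ι → Bool)) {c t : ℝ} (hc : 0 ≤ c) (ht : 0 < t)
    (ht₁ : t ≤ 1 / 2 - avgDistP 1 A / c) :
    ∃ p, 0 < p ∧ p ≤ 1 ∧ p / 2 - avgDistP p A / c = t := by
  have ht1 : t ≤ 1 := by
    have := div_nonneg (avgDistP_nonneg A zero_le_one le_rfl) hc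
    linarith
  have hρt : t / 2 - avgDistP t A / c ≤ t := by
    have := div_nonneg (avgDistP_nonneg A ht.le ht1) hc
    linarith
  have hcont : Continuous fun p => p / 2 - avgDistP p A / c := by
    have := continuous_avgDistP A
    fun_prop
  obtain ⟨p, hp, hpt⟩ := intermediate_value_Icc ht1 hcont.continuousOn ⟨hρt, ht₁⟩
  exact ⟨p, ht.trans_le hp.1, hp.2, hpt⟩

end Cube

/-- Corollary 4.6: for every `c₃ < 1/ln 2` and `c₄ > 2` there exists `δ > 0` such that for
every `n ≥ 1` and every `A ⊆ C_n` with `|A| ≥ 2` and `(ln |A|)/n ≤ δ`, there is `0 < p ≤ 1`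
such that, with `ρ = p/2 - Δ(A,p)/n`, one has
`c₃·ρ²·ln(1/ρ) ≤ (ln |A|)/n ≤ c₄·ρ·ln(1/ρ)`. -/
theorem stmt9 (c₃ c₄ : ℝ) (h₃ : c₃ < 1 / Real.log 2) (h₄ : 2 < c₄) :
    ∃ δ : ℝ, 0 < δ ∧
      ∀ n : ℕ, 1 ≤ n → ∀ A : Set (Fin n → Bool), 2 ≤ Nat.card A →
        Real.log (Nat.card A) / n ≤ δ →
        ∃ p : ℝ, 0 < p ∧ p ≤ 1 ∧
          ∀ ρ : ℝ, ρ = p / 2 - avgDistP p A / n →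
            c₃ * ρ ^ 2 * Real.log (1 / ρ) ≤ Real.log (Nat.card A) / n ∧
              Real.log (Nat.card A) / n ≤ c₄ * ρ * Real.log (1 / ρ) := by
  obtain ⟨δ, hδ, hscale⟩ := exists_entropy_scale h₄
  refine ⟨δ, hδ, fun n hn A hA hAδ => ?_⟩
  set L := Real.log (Nat.card A) / n
  have hn₀ : (0 : ℝ) < n := by exact_mod_cast hn
  have hA₁ : (1 : ℝ) < Nat.card A := by exact_mod_cast hA
  have hL : 0 < L := div_pos (log_pos hA₁) hn₀
  obtain ⟨η, hη₀, hη₁, hψ, hηc⟩ := hscale L hL hAδ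
  have : Nonempty (Fin n) := ⟨⟨0, hn⟩⟩
  have hρ₁ : η / 2 ≤ 1 / 2 - avgDistP 1 A / n := by
    refine (div_two_le_half_sub_avgDistP_one hη₀ hη₁.le ?_).trans_eq (by rw [Fintype.card_fin])
    calc _ ≤ exp (n * L) := by rw [Fintype.card_fin]; gcongr
      _ = Nat.card A := by rw [mul_div_cancel₀ _ hn₀.ne', exp_log (by linarith)]
  obtain ⟨t, ht₀, htη, ht⟩ := exists_negMulLog_eq (by positivity) (by positivity) hηc
  obtain ⟨p, hp₀, hp₁, hp⟩ := exists_half_sub_avgDistP_eq A hn₀.le ht₀ (htη.trans hρ₁)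
  refine ⟨p, hp₀, hp₁, fun ρ hρ => ?_⟩
  have hlog2 : 1 / Real.log 2 < 2 := by
    rw [div_lt_iff₀ (log_pos one_lt_two)]
    linarith [log_two_gt_d9]
  rw [hρ, hp]
  exact bounds_of_negMulLog_eq (h₃.trans hlog2) h₄ hL.le ht₀ (by linarith) ht
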